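/- arXiv:2304.05809 — 3 statements merged into one kernel-verified Lean document; each statement's English description precedes it below -/
import Mathlib

section
/- Let ν be a Cannings offspring vector of size N. Then for all j ∈ ℕ and k_1,…,k_j ∈ ℕ with k_1+⋯+k_j < N, the consistency relation Φ_j^{(N)}(k_1,…,k_j) = Φ_{j+1}^{(N)}(k_1,…,k_j,1) + Σ_{i=1}^j Φ_j^{(N)}(k_1,…,k_{i−1},k_i+1,k_{i+1},…,k_j) holds. -/
open MeasureTheory ProbabilityTheory Filter Finset

/-- A Cannings offspring vector of size `N`. -/
def IsCannings {Ω : Type*} [MeasurableSpace Ω] (μ : Measure Ω) (N : ℕ)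
    (ν : ℕ → Ω → ℕ) : Prop :=
  (∀ i, Measurable (ν i)) ∧
  (∀ᵐ ω ∂μ, ∑ i ∈ Finset.range N, ν i ω = N) ∧
  (∀ σ : Equiv.Perm (Fin N),
    Measure.map (fun ω (i : Fin N) => ν (σ i : ℕ) ω) μ =
      Measure.map (fun ω (i : Fin N) => ν (i : ℕ) ω) μ)

/-- `Φ_j^{(N)}(k_1,…,k_j) = ((N)_j/(N)_{k_1+⋯+k_j})·E((ν_1)_{k_1}⋯(ν_j)_{k_j})`. -/
noncomputable def Phi {Ω : Type*} [MeasurableSpace Ω] (μ : Measure Ω)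
    (ν : ℕ → Ω → ℕ) (N j : ℕ) (k : ℕ → ℕ) : ℝ :=
  ((N.descFactorial j : ℝ) / (N.descFactorial (∑ i ∈ Finset.range j, k i) : ℝ)) *
    ∫ ω, ∏ i ∈ Finset.range j, ((ν i ω).descFactorial (k i) : ℝ) ∂μ

/-!
Since `(n)_{k+1} = (n - k) (n)_k`, raising one exponent at a time and summing gives
`∑_{i<j} ∏_l (ν_l)_{k_l + δ_{il}} = (ν_0 + ⋯ + ν_{j-1} - K) ∏_l (ν_l)_{k_l}`, where `K = ∑ k_l`,
and `ν_0 + ⋯ + ν_{j-1} = N - (ν_j + ⋯ + ν_{N-1})` almost surely. By exchangeability each of the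
`N - j` expectations `E(ν_m ∏_l (ν_l)_{k_l})`, `j ≤ m < N`, equals the one with `m = j`, so
`(N - K) E ∏ (ν_l)_{k_l} = ∑_i E ∏_l (ν_l)_{k_l + δ_{il}} + (N - j) E(ν_j ∏ (ν_l)_{k_l})`.
Dividing by `(N)_{K+1} = (N - K) (N)_K` and multiplying by `(N)_j` is the consistency relation.
-/

open Function

theorem Nat.cast_descFactorial_succ {S : Type*} [CommRing S] (n m : ℕ) :
    (n.descFactorial (m + 1) : S) = ((n : S) - m) * n.descFactorial m := by
  rw [← descPochhammer_eval_eq_descFactorial, ← descPochhammer_eval_eq_descFactorial,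
    descPochhammer_succ_right, Polynomial.eval_mul, Polynomial.eval_sub, Polynomial.eval_X,
    Polynomial.eval_natCast, mul_comm]

namespace Finset

variable {ι α M : Type*} [DecidableEq ι]

@[to_additive]
theorem prod_apply_update_of_mem [CommMonoid M] {s : Finset ι} {i : ι} (hi : i ∈ s)
    (f : ι → α → M) (k : ι → α) (b : α) :
    ∏ l ∈ s, f l (update k i b l) = f i b * ∏ l ∈ s.erase i, f l (k l) := by
  rw [← mul_prod_erase s _ hi, update_self]
  exact congrArg _ (prod_congr rfl fun l hl => by rw [update_of_ne (ne_of_mem_erase hl)])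

@[to_additive]
theorem prod_range_succ_apply_update_self [CommMonoid M] (f : ℕ → α → M) (k : ℕ → α) (j : ℕ)
    (b : α) :
    ∏ i ∈ range (j + 1), f i (update k j b i) = f j b * ∏ i ∈ range j, f i (k i) := by
  rw [prod_apply_update_of_mem (self_mem_range_succ j), range_add_one,
    erase_insert notMem_range_self]

theorem prod_descFactorial_update_succ {s : Finset ι} {i : ι} (hi : i ∈ s) (x k : ι → ℕ) :
    ∏ l ∈ s, ((x l).descFactorial (update k i (k i + 1) l) : ℝ) =
      ((x i : ℝ) - k i) * ∏ l ∈ s, ((x l).descFactorial (k l) : ℝ) := by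
  rw [prod_apply_update_of_mem hi (fun l n => ((x l).descFactorial n : ℝ)),
    ← mul_prod_erase s _ hi, Nat.cast_descFactorial_succ, mul_assoc]

theorem sum_prod_descFactorial_update_succ (s : Finset ι) (x k : ι → ℕ) :
    ∑ i ∈ s, ∏ l ∈ s, ((x l).descFactorial (update k i (k i + 1) l) : ℝ) =
      (∑ i ∈ s, ((x i : ℝ) - k i)) * ∏ l ∈ s, ((x l).descFactorial (k l) : ℝ) := by
  rw [sum_mul]
  exact sum_congr rfl fun i hi => prod_descFactorial_update_succ hi x k

end Finset

namespace IsCannings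

variable {Ω : Type*} [MeasurableSpace Ω] {μ : Measure Ω} {N : ℕ} {ν : ℕ → Ω → ℕ}

theorem ae_le (hC : IsCannings μ N ν) {i : ℕ} (hi : i < N) : ∀ᵐ ω ∂μ, ν i ω ≤ N := by
  filter_upwards [hC.2.1] with ω hω
  exact hω ▸ single_le_sum (f := fun l => ν l ω) (fun _ _ => Nat.zero_le _) (mem_range.2 hi)

theorem measurable_comp (hC : IsCannings μ N ν) (i : ℕ) (g : ℕ → ℝ) :
    Measurable fun ω => g (ν i ω) :=
  (measurable_of_countable g).comp (hC.1 i)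

theorem integrable_prod [IsFiniteMeasure μ] (hC : IsCannings μ N ν) {s : Finset ℕ}
    (hs : ∀ i ∈ s, i < N) (g : ℕ → ℕ → ℝ) :
    Integrable (fun ω => ∏ i ∈ s, g i (ν i ω)) μ := by
  refine .of_bound (measurable_prod _ fun i _ => hC.measurable_comp i (g i)).aestronglyMeasurable
    (∏ i ∈ s, ∑ n ∈ range (N + 1), ‖g i n‖) ?_
  filter_upwards [(eventually_all_finset s).2 fun i hi => hC.ae_le (hs i hi)] with ω hω
  rw [norm_prod]
  exact prod_le_prod (fun _ _ => norm_nonneg _) fun i hi =>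
    single_le_sum (f := fun n => ‖g i n‖) (fun _ _ => norm_nonneg _)
      (mem_range.2 (Nat.lt_succ_of_le (hω i hi)))

theorem integral_comp_perm (hC : IsCannings μ N ν) (σ : Equiv.Perm (Fin N))
    (F : (Fin N → ℕ) → ℝ) :
    ∫ ω, F (fun i => ν (σ i) ω) ∂μ = ∫ ω, F (fun i => ν i ω) ∂μ := by
  have hF : Measurable F := measurable_of_countable F
  rw [← integral_map (measurable_pi_lambda _ fun i => hC.1 _).aemeasurable
      hF.aestronglyMeasurable, hC.2.2 σ,
    integral_map (measurable_pi_lambda _ fun i => hC.1 _).aemeasurable hF.aestronglyMeasurable]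

theorem integral_mul_prod_eq (hC : IsCannings μ N ν) {j m : ℕ} (hjm : j ≤ m) (hm : m < N)
    (f : ℕ → ℝ) (g : ℕ → ℕ → ℝ) :
    ∫ ω, f (ν m ω) * ∏ i ∈ range j, g i (ν i ω) ∂μ =
      ∫ ω, f (ν j ω) * ∏ i ∈ range j, g i (ν i ω) ∂μ := by
  have hjN : j ≤ N := hjm.trans hm.le
  have hfix (i : Fin j) : Equiv.swap ⟨j, hjm.trans_lt hm⟩ ⟨m, hm⟩ (Fin.castLE hjN i) =
      Fin.castLE hjN i :=
    Equiv.swap_apply_of_ne_of_ne (Fin.ne_of_val_ne (by simp; omega))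
      (Fin.ne_of_val_ne (by simp; omega))
  have hprod (ω : Ω) : ∏ i : Fin j, g i (ν i ω) = ∏ i ∈ range j, g i (ν i ω) :=
    Fin.prod_univ_eq_prod_range (fun i => g i (ν i ω)) j
  have key := hC.integral_comp_perm (Equiv.swap ⟨j, hjm.trans_lt hm⟩ ⟨m, hm⟩)
    fun x => f (x ⟨m, hm⟩) * ∏ i : Fin j, g i (x (Fin.castLE hjN i))
  simp only [Equiv.swap_apply_right, hfix, Fin.val_castLE, hprod] at key
  exact key.symm

theorem sub_mul_integral_prod_descFactorial [IsFiniteMeasure μ] (hC : IsCannings μ N ν) {j : ℕ}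
    (hjN : j ≤ N) (k : ℕ → ℕ) :
    ((N : ℝ) - ∑ i ∈ range j, (k i : ℝ)) *
        ∫ ω, ∏ i ∈ range j, ((ν i ω).descFactorial (k i) : ℝ) ∂μ =
      ∑ i ∈ range j, ∫ ω, ∏ l ∈ range j, ((ν l ω).descFactorial (update k i (k i + 1) l) : ℝ) ∂μ +
        ((N : ℝ) - j) *
          ∫ ω, (ν j ω : ℝ) * ∏ i ∈ range j, ((ν i ω).descFactorial (k i) : ℝ) ∂μ := by
  set P : Ω → ℝ := fun ω => ∏ i ∈ range j, ((ν i ω).descFactorial (k i) : ℝ)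
  set Q : ℕ → Ω → ℝ := fun i ω =>
    ∏ l ∈ range j, ((ν l ω).descFactorial (update k i (k i + 1) l) : ℝ)
  have hrange : ∀ i ∈ range j, i < N := fun i hi => (mem_range.1 hi).trans_le hjN
  have hP : Integrable P μ := hC.integrable_prod hrange fun i n => (n.descFactorial (k i) : ℝ)
  have hQ (i : ℕ) : Integrable (Q i) μ :=
    hC.integrable_prod hrange fun l n => (n.descFactorial (update k i (k i + 1) l) : ℝ)
  have hνP (m : ℕ) (hm : m ∈ Ico j N) : Integrable (fun ω => (ν m ω : ℝ) * P ω) μ := by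
    refine hP.bdd_mul (c := N) (hC.measurable_comp m _).aestronglyMeasurable ?_
    filter_upwards [hC.ae_le (mem_Ico.1 hm).2] with ω hω
    simpa using hω
  have hpt : ∀ᵐ ω ∂μ, ((N : ℝ) - ∑ i ∈ range j, (k i : ℝ)) * P ω =
      ∑ i ∈ range j, Q i ω + ∑ m ∈ Ico j N, (ν m ω : ℝ) * P ω := by
    filter_upwards [hC.2.1] with ω hω
    have hsplit := sum_range_add_sum_Ico (fun i => (ν i ω : ℝ)) hjN
    rw [show ∑ i ∈ range N, (ν i ω : ℝ) = N by exact_mod_cast hω] at hsplit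
    rw [sum_prod_descFactorial_update_succ, ← sum_mul, ← add_mul, sum_sub_distrib]
    congr 1
    linarith
  calc ((N : ℝ) - ∑ i ∈ range j, (k i : ℝ)) * ∫ ω, P ω ∂μ
      = ∫ ω, ((N : ℝ) - ∑ i ∈ range j, (k i : ℝ)) * P ω ∂μ := (integral_const_mul _ _).symm
    _ = ∑ i ∈ range j, ∫ ω, Q i ω ∂μ + ∑ m ∈ Ico j N, ∫ ω, (ν m ω : ℝ) * P ω ∂μ := by
      rw [integral_congr_ae hpt, integral_add (integrable_finsetSum _ fun i _ => hQ i)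
        (integrable_finsetSum _ hνP), integral_finsetSum _ fun i _ => hQ i,
        integral_finsetSum _ hνP]
    _ = ∑ i ∈ range j, ∫ ω, Q i ω ∂μ + ((N : ℝ) - j) * ∫ ω, (ν j ω : ℝ) * P ω ∂μ := by
      rw [sum_congr rfl fun m hm => hC.integral_mul_prod_eq (mem_Ico.1 hm).1 (mem_Ico.1 hm).2
        (fun n => (n : ℝ)) fun i n => (n.descFactorial (k i) : ℝ), sum_const, Nat.card_Ico,
        nsmul_eq_mul, Nat.cast_sub hjN]

end IsCannings

section Phi

variable {Ω : Type*} [MeasurableSpace Ω] (μ : Measure Ω) (ν : ℕ → Ω → ℕ) (N : ℕ)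

theorem Phi_succ_update_self_one (j : ℕ) (k : ℕ → ℕ) :
    Phi μ ν N (j + 1) (update k j 1) =
      (N.descFactorial (j + 1) : ℝ) / N.descFactorial (∑ i ∈ range j, k i + 1) *
        ∫ ω, (ν j ω : ℝ) * ∏ i ∈ range j, ((ν i ω).descFactorial (k i) : ℝ) ∂μ := by
  have hprod (ω : Ω) : ∏ i ∈ range (j + 1), ((ν i ω).descFactorial (update k j 1 i) : ℝ) =
      ν j ω * ∏ i ∈ range j, ((ν i ω).descFactorial (k i) : ℝ) := by
    rw [prod_range_succ_apply_update_self (fun i n => ((ν i ω).descFactorial n : ℝ)),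
      Nat.descFactorial_one]
  rw [Phi, sum_range_succ_apply_update_self (fun _ n => n), add_comm 1]
  simp only [hprod]

theorem sum_Phi_update_succ (j : ℕ) (k : ℕ → ℕ) :
    ∑ i ∈ range j, Phi μ ν N j (update k i (k i + 1)) =
      (N.descFactorial j : ℝ) / N.descFactorial (∑ i ∈ range j, k i + 1) * ∑ i ∈ range j,
        ∫ ω, ∏ l ∈ range j, ((ν l ω).descFactorial (update k i (k i + 1) l) : ℝ) ∂μ := by
  rw [mul_sum]
  refine sum_congr rfl fun i hi => ?_
  rw [Phi, sum_apply_update_of_mem hi (fun _ n => n), add_right_comm, add_sum_erase _ _ hi]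

end Phi

theorem cannings_Phi_consistency_general
    {Ω : Type*} [MeasurableSpace Ω] (μ : Measure Ω) [IsProbabilityMeasure μ]
    (N : ℕ) (ν : ℕ → Ω → ℕ) (hC : IsCannings μ N ν)
    (j : ℕ) (k : ℕ → ℕ) (hk : ∀ i < j, 1 ≤ k i)
    (hsum : ∑ i ∈ Finset.range j, k i < N) :
    Phi μ ν N j k =
      Phi μ ν N (j + 1) (Function.update k j 1) +
        ∑ i ∈ Finset.range j, Phi μ ν N j (Function.update k i (k i + 1)) := by
  set K := ∑ i ∈ range j, k i with hK
  have hjK : j ≤ K := by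
    simpa using card_nsmul_le_sum (range j) k 1 fun i hi => hk i (mem_range.1 hi)
  have hkey := hC.sub_mul_integral_prod_descFactorial (hjK.trans hsum.le) k
  rw [← Nat.cast_sum, ← hK] at hkey
  have hNK : (N : ℝ) - K ≠ 0 := sub_ne_zero.2 (by exact_mod_cast hsum.ne')
  have hdesc : (N.descFactorial K : ℝ) ≠ 0 := by
    exact_mod_cast (Nat.descFactorial_eq_zero_iff_lt.not.2 hsum.not_gt)
  rw [Phi_succ_update_self_one, sum_Phi_update_succ, Phi, ← hK,
    Nat.cast_descFactorial_succ N K, Nat.cast_descFactorial_succ N j]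
  field_simp
  linear_combination (N.descFactorial j : ℝ) * hkey

/-- Consistency relation for the transition functions `Φ_j^{(N)}` of a Cannings model:
`Φ_j(k_1,…,k_j) = Φ_{j+1}(k_1,…,k_j,1) + Σ_{i=1}^j Φ_j(k_1,…,k_i+1,…,k_j)`. -/
theorem cannings_Phi_consistency
    {Ω : Type*} [MeasurableSpace Ω] (μ : Measure Ω) [IsProbabilityMeasure μ]
    (N : ℕ) (ν : ℕ → Ω → ℕ) (hC : IsCannings μ N ν)
    (j : ℕ) (hj : 1 ≤ j) (k : ℕ → ℕ) (hk : ∀ i < j, 1 ≤ k i)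
    (hsum : ∑ i ∈ Finset.range j, k i < N) :
    Phi μ ν N j k =
      Phi μ ν N (j + 1) (Function.update k j 1) +
        ∑ i ∈ Finset.range j, Phi μ ν N j (Function.update k i (k i + 1)) :=
  cannings_Phi_consistency_general μ N ν hC j k hk hsum
end

section
/- Let S be a nonempty finite set, let (c_N)_{N∈ℕ} be positive real numbers with c_N → 0 as N → ∞, let (P_N)_{N∈ℕ} be row-stochastic S×S real matrices (nonnegative entries, each row summing to 1), and let Q be an S×S real matrix such that (P_N − I)/c_N → Q entrywise as N → ∞. Then for every t ≥ 0, P_N^{⌊t/c_N⌋} → exp(tQ) entrywise as N → ∞. -/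
/-!
A stochastic matrix `P` is a contraction for the `ℓ∞` operator norm, and so is
`exp (P - 1) = e⁻¹ • exp P`. For contractions `‖a ^ k - b ^ k‖ ≤ k * ‖a - b‖`, hence with
`u = P_N - 1` and `k = ⌊t / c_N⌋`,
`‖P_N ^ k - exp (k • u)‖ ≤ k * ‖exp u - 1 - u‖`.
Since `exp u - 1 - u = o(u)` and `k * ‖u‖` stays bounded (`k • u → t • Q`), the right-hand side
tends to `0`, while `exp (k • u) → exp (t • Q)` by continuity.
-/

open Filter Finset Nat

/-- The matrix exponential `exp A = Σ_{n≥0} A^n/n!`, defined entrywise via the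
(absolutely convergent) series in the finite-dimensional space of matrices. -/
noncomputable def matExp {S : Type*} [Fintype S] [DecidableEq S]
    (A : Matrix S S ℝ) : Matrix S S ℝ :=
  ∑' (n : ℕ), ((n ! : ℝ)⁻¹) • A ^ n

open NormedSpace Asymptotics Topology

theorem norm_pow_sub_pow_le_of_norm_le_one {R : Type*} [SeminormedRing R] [NormOneClass R]
    {a b : R} (ha : ‖a‖ ≤ 1) (hb : ‖b‖ ≤ 1) (n : ℕ) : ‖a ^ n - b ^ n‖ ≤ n * ‖a - b‖ := by
  induction n with
  | zero => simp
  | succ n ih =>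
    have hbn : ‖b ^ n‖ ≤ 1 := (norm_pow_le b n).trans (pow_le_one₀ (norm_nonneg b) hb)
    calc ‖a ^ (n + 1) - b ^ (n + 1)‖ = ‖a * (a ^ n - b ^ n) + (a - b) * b ^ n‖ := by
          rw [pow_succ' a, pow_succ' b]; noncomm_ring
      _ ≤ ‖a‖ * ‖a ^ n - b ^ n‖ + ‖a - b‖ * ‖b ^ n‖ :=
          (norm_add_le _ _).trans (add_le_add (norm_mul_le _ _) (norm_mul_le _ _))
      _ ≤ 1 * (n * ‖a - b‖) + ‖a - b‖ * 1 := by gcongr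
      _ = (n + 1 : ℕ) * ‖a - b‖ := by push_cast; ring

section BanachAlgebra

variable {𝔸 : Type*} [NormedRing 𝔸] [NormOneClass 𝔸] [NormedAlgebra ℝ 𝔸]

theorem norm_exp_le_exp_norm (x : 𝔸) : ‖exp x‖ ≤ Real.exp ‖x‖ := by
  have hbound : ∀ n : ℕ, ‖(n !⁻¹ : ℝ) • x ^ n‖ ≤ ‖x‖ ^ n / n ! := fun n => by
    rw [norm_smul, Real.norm_of_nonneg (by positivity), inv_mul_eq_div]
    gcongr
    exact norm_pow_le x n
  rw [exp_eq_tsum ℝ, Real.exp_eq_exp_ℝ, exp_eq_tsum_div]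
  exact (norm_tsum_le_tsum_norm (norm_expSeries_summable' x)).trans
    ((norm_expSeries_summable' x).tsum_le_tsum hbound (Real.summable_pow_div_factorial ‖x‖))

variable [CompleteSpace 𝔸]

theorem norm_exp_sub_one_le_one {a : 𝔸} (ha : ‖a‖ ≤ 1) : ‖exp (a - 1)‖ ≤ 1 := by
  let := NormedAlgebra.restrictScalars ℚ ℝ 𝔸
  have hsplit : exp (a - 1) = algebraMap ℝ 𝔸 (Real.exp (-1)) * exp a := by
    rw [Real.exp_eq_exp_ℝ, algebraMap_exp_comm,
      ← exp_add_of_commute (Algebra.commute_algebraMap_left _ a), map_neg, map_one, neg_add_eq_sub]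
  calc ‖exp (a - 1)‖ ≤ Real.exp (-1) * Real.exp ‖a‖ := by
        rw [hsplit]
        refine (norm_mul_le _ _).trans ?_
        rw [norm_algebraMap', Real.norm_of_nonneg (Real.exp_nonneg _)]
        gcongr
        exact norm_exp_le_exp_norm a
    _ ≤ Real.exp (-1) * Real.exp 1 := by gcongr
    _ = 1 := by rw [← Real.exp_add]; simp

theorem norm_pow_sub_exp_nsmul_sub_one_le {a : 𝔸} (ha : ‖a‖ ≤ 1) (n : ℕ) :
    ‖a ^ n - exp (n • (a - 1))‖ ≤ n * ‖exp (a - 1) - 1 - (a - 1)‖ := by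
  let := NormedAlgebra.restrictScalars ℚ ℝ 𝔸
  rw [exp_nsmul]
  calc ‖a ^ n - exp (a - 1) ^ n‖ ≤ n * ‖a - exp (a - 1)‖ :=
        norm_pow_sub_pow_le_of_norm_le_one ha (norm_exp_sub_one_le_one ha) n
    _ = n * ‖exp (a - 1) - 1 - (a - 1)‖ := by rw [← norm_neg]; congr 2; abel

theorem tendsto_pow_of_tendsto_nsmul_sub_one {α : Type*} {l : Filter α} {a : α → 𝔸} {k : α → ℕ}
    {B : 𝔸} (ha : ∀ x, ‖a x‖ ≤ 1) (ha1 : Tendsto a l (𝓝 1))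
    (hk : Tendsto (fun x => k x • (a x - 1)) l (𝓝 B)) :
    Tendsto (fun x => a x ^ k x) l (𝓝 (exp B)) := by
  have hu : Tendsto (fun x => a x - 1) l (𝓝 0) := by simpa using ha1.sub_const 1
  have hrem : (fun x => exp (a x - 1) - 1 - (a x - 1)) =o[l] fun x => a x - 1 := by
    simpa [Function.comp_def] using
      (hasFDerivAt_exp_zero (𝕂 := ℝ) (𝔸 := 𝔸)).isLittleO.comp_tendsto hu
  have herr : Tendsto (fun x => (k x : ℝ) * ‖exp (a x - 1) - 1 - (a x - 1)‖) l (𝓝 0) := by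
    have hk_rem : (fun x => (k x : ℝ) * ‖exp (a x - 1) - 1 - (a x - 1)‖) =o[l]
        fun x => ‖k x • (a x - 1)‖ := by
      refine ((isBigO_refl (fun x => (k x : ℝ)) l).mul_isLittleO hrem.norm_norm).congr_right
        fun x => by rw [RCLike.norm_nsmul ℝ, nsmul_eq_mul]
    exact (isLittleO_one_iff ℝ).mp (hk_rem.trans_isBigO (hk.norm.isBigO_one ℝ))
  have hdiff : Tendsto (fun x => a x ^ k x - exp (k x • (a x - 1))) l (𝓝 0) :=
    squeeze_zero_norm (fun x => norm_pow_sub_exp_nsmul_sub_one_le (ha x) (k x)) herr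
  let := NormedAlgebra.restrictScalars ℚ ℝ 𝔸
  simpa using hdiff.add hk.exp

end BanachAlgebra

theorem tendsto_natFloor_div_mul {α : Type*} {l : Filter α} {c : α → ℝ} (hcpos : ∀ x, 0 < c x)
    (hc0 : Tendsto c l (𝓝 0)) {t : ℝ} (ht : 0 ≤ t) :
    Tendsto (fun x => (⌊t / c x⌋₊ : ℝ) * c x) l (𝓝 t) := by
  have hinv : Tendsto (fun x => (c x)⁻¹) l atTop :=
    tendsto_inv_nhdsGT_zero.comp (tendsto_nhdsWithin_iff.mpr ⟨hc0, Eventually.of_forall hcpos⟩)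
  simpa [Function.comp_def, div_eq_mul_inv] using (tendsto_nat_floor_mul_div_atTop ht).comp hinv

open scoped Matrix.Norms.Operator in
theorem Matrix.linfty_opNorm_le_one_of_nonneg_of_sum_le_one {m n : Type*} [Fintype m] [Fintype n]
    {P : Matrix m n ℝ} (h0 : ∀ i j, 0 ≤ P i j) (h1 : ∀ i, ∑ j, P i j ≤ 1) : ‖P‖ ≤ 1 := by
  have : ‖P‖₊ ≤ 1 := by
    rw [linfty_opNNNorm_def]
    refine Finset.sup_le fun i _ => ?_
    rw [← NNReal.coe_le_coe]
    push_cast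
    simpa [abs_of_nonneg (h0 i _)] using h1 i
  exact_mod_cast this

/-- Convergence of discrete semigroups: if `P_N` are stochastic matrices,
`c_N > 0`, `c_N → 0` and `(P_N - I)/c_N → Q` entrywise, then
`P_N^{⌊t/c_N⌋} → exp(tQ)` entrywise for every `t ≥ 0`. -/
theorem stochastic_matrix_power_tendsto_exp
    {S : Type*} [Fintype S] [DecidableEq S] [Nonempty S]
    (c : ℕ → ℝ) (hcpos : ∀ N, 0 < c N) (hc0 : Tendsto c atTop (nhds 0))
    (P : ℕ → Matrix S S ℝ)
    (hPnonneg : ∀ N i j, 0 ≤ P N i j)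
    (hProw : ∀ N i, ∑ j, P N i j = 1)
    (Q : Matrix S S ℝ)
    (hQ : ∀ i j, Tendsto (fun N => ((P N - 1) i j) / c N) atTop (nhds (Q i j)))
    (t : ℝ) (ht : 0 ≤ t) :
    ∀ i j, Tendsto (fun N => (P N ^ ⌊t / c N⌋₊) i j) atTop (nhds (matExp (t • Q) i j)) := by
  have hgen : Tendsto (fun N => (c N)⁻¹ • (P N - 1)) atTop (𝓝 Q) :=
    tendsto_pi_nhds.2 fun i => tendsto_pi_nhds.2 fun j => by
      simpa [div_eq_inv_mul] using hQ i j
  have hsub : ∀ N, c N • (c N)⁻¹ • (P N - 1) = P N - 1 := fun N =>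
    smul_inv_smul₀ (hcpos N).ne' _
  have hP1 : Tendsto P atTop (𝓝 1) := by
    simpa [hsub] using (hc0.smul hgen).add_const 1
  have hk : Tendsto (fun N => ⌊t / c N⌋₊ • (P N - 1)) atTop (𝓝 (t • Q)) :=
    ((tendsto_natFloor_div_mul hcpos hc0 ht).smul hgen).congr fun N => by
      rw [mul_smul, hsub, Nat.cast_smul_eq_nsmul]
  have hlim : Tendsto (fun N => P N ^ ⌊t / c N⌋₊) atTop (𝓝 (exp (t • Q))) := by
    open scoped Matrix.Norms.Operator in
    exact tendsto_pow_of_tendsto_nsmul_sub_one (fun N =>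
      Matrix.linfty_opNorm_le_one_of_nonneg_of_sum_le_one (hPnonneg N) fun i => (hProw N i).le)
      hP1 hk
  have hexp : matExp (t • Q) = exp (t • Q) := by rw [exp_eq_tsum ℝ]; rfl
  intro i j
  rw [hexp]
  exact tendsto_pi_nhds.1 (tendsto_pi_nhds.1 hlim i) j
end

section
/- Let ξ be an ℕ₀-valued random variable with E(ξ²) < ∞, L ∈ ℕ, and u_1,…,u_L,u_K ≥ 0 with u_1+⋯+u_L+u_K = 1, and let Y = (Y_1,…,Y_L) be a random vector with probability mass function p(j) := E((ξ)_{|j|}·u_K^{ξ−|j|})·∏_{ℓ=1}^L u_ℓ^{j_ℓ}/j_ℓ!. Then for every ℓ ∈ [L] and m ∈ ℕ₀, E((Y_ℓ)_m) = E((ξ)_m)·u_ℓ^m, and for all ℓ_1, ℓ_2 ∈ [L] with ℓ_1 ≠ ℓ_2, Cov(Y_{ℓ_1}, Y_{ℓ_2}) = (E((ξ)_2) − (E ξ)²)·u_{ℓ_1}·u_{ℓ_2}. -/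
/-!
Conditionally on `ξ = n`, `Y` is distributed as the first `L` cells of a multinomial vector with
`n` trials and cell probabilities `(u, u_K)`: the pmf `p` says that the law of `Y` is the
`ξ`-mixture of these multinomial laws (the multinomial weights are at most `1`, so the expectation
in `p` is that of a bounded function). For a multinomial vector the joint factorial moment
`E ∏ (Y_ℓ)_{c_ℓ}` equals `(n)_{|c|} ∏ u_ℓ^{c_ℓ}`, since the substitution `j = c + i` turns the sum
into the total mass of a multinomial law with `n - |c|` trials. Averaging over `ξ` gives
`E ∏ (Y_ℓ)_{c_ℓ} = E (ξ)_{|c|} · ∏ u_ℓ^{c_ℓ}`, and both claims are the cases `c = m e_ℓ` and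
`c = e_{ℓ₁} + e_{ℓ₂}`.
-/

open MeasureTheory ProbabilityTheory Finset Nat
open scoped ENNReal

lemma sum_piAntidiag_prod_pow_div_factorial {ι : Type*} [Fintype ι] [DecidableEq ι]
    (u : ι → ℝ) (k : ℕ) :
    ∑ j ∈ piAntidiag univ k, ∏ ℓ, u ℓ ^ j ℓ / ((j ℓ)! : ℝ) = (∑ ℓ, u ℓ) ^ k / k ! := by
  rw [sum_pow_eq_sum_piAntidiag, sum_div]
  refine sum_congr rfl fun j hj => ?_
  have hspec : (∏ ℓ, (j ℓ)!) * Nat.multinomial univ j = k ! := by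
    rw [Nat.multinomial_spec, (mem_piAntidiag.1 hj).1]
  rw [prod_div_distrib,
    div_eq_div_iff (prod_ne_zero_iff.2 fun ℓ _ => by positivity) (by positivity)]
  push_cast [← hspec]
  ring

lemma descFactorial_mul_pow_div_factorial (x : ℝ) (a b : ℕ) :
    ((a + b).descFactorial a : ℝ) * (x ^ (a + b) / (a + b)!) = x ^ a * (x ^ b / b !) := by
  have h : b ! * (a + b).descFactorial a = (a + b)! := by
    simpa using Nat.factorial_mul_descFactorial (Nat.le_add_right a b)
  rw [← h, pow_add]
  push_cast
  field_simp

lemma prod_apply_pi_single {ι N M : Type*} [Fintype ι] [Zero N] [CommMonoid M] [DecidableEq ι]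
    {f : ι → N → M} (hf : ∀ ℓ, f ℓ 0 = 1) (ℓ : ι) (a : N) :
    ∏ ℓ', f ℓ' ((Pi.single ℓ a : ι → N) ℓ') = f ℓ a := by
  rw [Fintype.prod_eq_single ℓ fun ℓ' h => by rw [Pi.single_eq_of_ne h, hf], Pi.single_eq_same]

lemma prod_apply_pi_single_add_pi_single {ι N M : Type*} [Fintype ι] [AddZeroClass N] [CommMonoid M]
    [DecidableEq ι] {f : ι → N → M} (hf : ∀ ℓ, f ℓ 0 = 1) {ℓ₁ ℓ₂ : ι} (hne : ℓ₁ ≠ ℓ₂) (a b : N) :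
    ∏ ℓ, f ℓ ((Pi.single ℓ₁ a + Pi.single ℓ₂ b : ι → N) ℓ) = f ℓ₁ a * f ℓ₂ b := by
  rw [Fintype.prod_eq_mul ℓ₁ ℓ₂ hne fun ℓ h => by
    simp only [Pi.add_apply, Pi.single_eq_of_ne h.1, Pi.single_eq_of_ne h.2, add_zero, hf]]
  simp [Pi.single_eq_of_ne hne, Pi.single_eq_of_ne hne.symm]

/-- The probability that the first coordinates of a multinomial vector with `n` trials and cell
probabilities `(u, uK)` equal `j`; it vanishes when `n < |j|`, which makes the truncated `n - |j|`
harmless. -/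
noncomputable def multinomialWeight {ι : Type*} [Fintype ι] (u : ι → ℝ) (uK : ℝ) (n : ℕ)
    (j : ι → ℕ) : ℝ :=
  (n.descFactorial (∑ ℓ, j ℓ) : ℝ) * uK ^ (n - ∑ ℓ, j ℓ) * ∏ ℓ, u ℓ ^ j ℓ / ((j ℓ)! : ℝ)

section multinomialWeight

variable {ι : Type*} [Fintype ι] {u : ι → ℝ} {uK : ℝ}

lemma multinomialWeight_nonneg (hu : ∀ ℓ, 0 ≤ u ℓ) (huK : 0 ≤ uK) (n : ℕ) (j : ι → ℕ) :
    0 ≤ multinomialWeight u uK n j :=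
  mul_nonneg (mul_nonneg (Nat.cast_nonneg _) (pow_nonneg huK _))
    (prod_nonneg fun ℓ _ => div_nonneg (pow_nonneg (hu ℓ) _) (Nat.cast_nonneg _))

lemma multinomialWeight_eq_zero_of_lt {n : ℕ} {j : ι → ℕ} (h : n < ∑ ℓ, j ℓ) :
    multinomialWeight u uK n j = 0 := by
  simp [multinomialWeight, Nat.descFactorial_eq_zero_iff_lt.2 h]

/-- The multinomial theorem on each level set `|j| = k`, then the binomial theorem in `k`. -/
lemma hasSum_multinomialWeight (husum : ∑ ℓ, u ℓ + uK = 1) (n : ℕ) :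
    HasSum (multinomialWeight u uK n) 1 := by
  classical
  have hdisj : (range (n + 1) : Set ℕ).PairwiseDisjoint (piAntidiag (univ : Finset ι)) :=
    fun k₁ _ k₂ _ hne => disjoint_left.2 fun j h₁ h₂ =>
      hne ((mem_piAntidiag.1 h₁).1.symm.trans (mem_piAntidiag.1 h₂).1)
  set s := (range (n + 1)).biUnion (piAntidiag (univ : Finset ι))
  have hsupp : ∀ j ∉ s, multinomialWeight u uK n j = 0 := fun j hj =>
    multinomialWeight_eq_zero_of_lt (by
      by_contra! h
      exact hj (mem_biUnion.2
        ⟨_, mem_range.2 (Nat.lt_succ_of_le h), mem_piAntidiag.2 ⟨rfl, by simp⟩⟩))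
  have hlevel : ∀ k, ∑ j ∈ piAntidiag univ k, multinomialWeight u uK n j =
      (∑ ℓ, u ℓ) ^ k * uK ^ (n - k) * n.choose k := fun k => by
    rw [sum_congr rfl fun j hj => show multinomialWeight u uK n j =
        n.descFactorial k * uK ^ (n - k) * ∏ ℓ, u ℓ ^ j ℓ / ((j ℓ)! : ℝ) by
      rw [multinomialWeight, (mem_piAntidiag.1 hj).1],
      ← mul_sum, sum_piAntidiag_prod_pow_div_factorial, Nat.descFactorial_eq_factorial_mul_choose]
    push_cast
    field_simp
  have htotal : ∑ j ∈ s, multinomialWeight u uK n j = 1 := by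
    rw [sum_biUnion hdisj, sum_congr rfl fun k _ => hlevel k, ← add_pow, husum, one_pow]
  exact htotal ▸ hasSum_sum_of_ne_finset_zero hsupp

lemma multinomialWeight_le_one (hu : ∀ ℓ, 0 ≤ u ℓ) (huK : 0 ≤ uK) (husum : ∑ ℓ, u ℓ + uK = 1)
    (n : ℕ) (j : ι → ℕ) : multinomialWeight u uK n j ≤ 1 :=
  le_hasSum (hasSum_multinomialWeight husum n) j fun j' _ => multinomialWeight_nonneg hu huK n j'

lemma prod_descFactorial_mul_multinomialWeight_add (n : ℕ) (c i : ι → ℕ) :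
    (∏ ℓ, ((c ℓ + i ℓ).descFactorial (c ℓ) : ℝ)) * multinomialWeight u uK n (c + i) =
      (n.descFactorial (∑ ℓ, c ℓ) * ∏ ℓ, u ℓ ^ c ℓ) *
        multinomialWeight u uK (n - ∑ ℓ, c ℓ) i := by
  have hsum : ∑ ℓ, (c + i) ℓ = ∑ ℓ, c ℓ + ∑ ℓ, i ℓ := sum_add_distrib
  have hprod : (∏ ℓ, ((c ℓ + i ℓ).descFactorial (c ℓ) : ℝ)) *
      ∏ ℓ, u ℓ ^ (c + i) ℓ / ((c + i) ℓ)! =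
        (∏ ℓ, u ℓ ^ c ℓ) * ∏ ℓ, u ℓ ^ i ℓ / (i ℓ)! := by
    simp only [← prod_mul_distrib, Pi.add_apply, descFactorial_mul_pow_div_factorial]
  rw [multinomialWeight, multinomialWeight, hsum, ← Nat.sub_sub,
    ← Nat.descFactorial_mul_descFactorial (Nat.le_add_right (∑ ℓ, c ℓ) (∑ ℓ, i ℓ)),
    Nat.add_sub_cancel_left]
  push_cast
  linear_combination (n.descFactorial (∑ ℓ, c ℓ) * (n - ∑ ℓ, c ℓ).descFactorial (∑ ℓ, i ℓ) *
    uK ^ (n - ∑ ℓ, c ℓ - ∑ ℓ, i ℓ) : ℝ) * hprod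

lemma hasSum_prod_descFactorial_mul_multinomialWeight (husum : ∑ ℓ, u ℓ + uK = 1) (n : ℕ)
    (c : ι → ℕ) :
    HasSum (fun j => (∏ ℓ, ((j ℓ).descFactorial (c ℓ) : ℝ)) * multinomialWeight u uK n j)
      (n.descFactorial (∑ ℓ, c ℓ) * ∏ ℓ, u ℓ ^ c ℓ) := by
  rw [← (add_right_injective c).hasSum_iff]
  · simpa only [Function.comp_def, Pi.add_apply, prod_descFactorial_mul_multinomialWeight_add,
      mul_one] using (hasSum_multinomialWeight husum (n - ∑ ℓ, c ℓ)).mul_left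
        (n.descFactorial (∑ ℓ, c ℓ) * ∏ ℓ, u ℓ ^ c ℓ)
  · intro j hj
    obtain ⟨ℓ, hℓ⟩ : ∃ ℓ, j ℓ < c ℓ := by
      by_contra! h
      exact hj ⟨j - c, funext fun ℓ => Nat.add_sub_of_le (h ℓ)⟩
    rw [prod_eq_zero (mem_univ ℓ) (by simp [Nat.descFactorial_eq_zero_iff_lt.2 hℓ]), zero_mul]

end multinomialWeight

section mixture

variable {Ω Ω' : Type*} [MeasurableSpace Ω] [MeasurableSpace Ω'] {μ : Measure Ω}
  {μ' : Measure Ω'}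

lemma lintegral_comp_eq_tsum {α : Type*} [MeasurableSpace α] [Countable α]
    [MeasurableSingletonClass α] {X : Ω → α} (hX : Measurable X) (g : α → ℝ≥0∞) :
    ∫⁻ ω, g (X ω) ∂μ = ∑' a, g a * μ {ω | X ω = a} := by
  rw [← lintegral_map (measurable_of_countable g) hX, lintegral_countable']
  exact tsum_congr fun a => by rw [Measure.map_apply hX (measurableSet_singleton a)]; rfl

lemma lintegral_comp_eq_lintegral_tsum_of_measure_eq {α β : Type*} [MeasurableSpace α]
    [Countable α] [MeasurableSingletonClass α] [MeasurableSpace β] [Countable β]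
    [MeasurableSingletonClass β] {X : Ω → β} {Y : Ω' → α} (hX : Measurable X) (hY : Measurable Y)
    (q : β → α → ℝ≥0∞) (hlaw : ∀ a, μ' {ω' | Y ω' = a} = ∫⁻ ω, q (X ω) a ∂μ) (F : α → ℝ≥0∞) :
    ∫⁻ ω', F (Y ω') ∂μ' = ∫⁻ ω, ∑' a, F a * q (X ω) a ∂μ := by
  have hq : ∀ a, Measurable fun ω => q (X ω) a := fun a =>
    (measurable_of_countable fun b => q b a).comp hX
  rw [lintegral_comp_eq_tsum hY, lintegral_tsum fun a => ((hq a).const_mul (F a)).aemeasurable]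
  exact tsum_congr fun a => by rw [hlaw, lintegral_const_mul _ (hq a)]

variable {ι : Type*} [Fintype ι] {u : ι → ℝ} {uK : ℝ} {ξ : Ω → ℕ} {Y : Ω' → ι → ℕ}

lemma measure_eq_lintegral_multinomialWeight [IsFiniteMeasure μ] [IsFiniteMeasure μ']
    (hξ : Measurable ξ) (hu : ∀ ℓ, 0 ≤ u ℓ) (huK : 0 ≤ uK) (husum : ∑ ℓ, u ℓ + uK = 1)
    {j : ι → ℕ} (hpmf : (μ' {ω' | Y ω' = j}).toReal =
      (∫ ω, ((ξ ω).descFactorial (∑ ℓ, j ℓ) : ℝ) * uK ^ (ξ ω - ∑ ℓ, j ℓ) ∂μ) *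
        ∏ ℓ, u ℓ ^ j ℓ / ((j ℓ)! : ℝ)) :
    μ' {ω' | Y ω' = j} = ∫⁻ ω, ENNReal.ofReal (multinomialWeight u uK (ξ ω) j) ∂μ := by
  have hint : Integrable (fun ω => multinomialWeight u uK (ξ ω) j) μ :=
    .of_bound
      ((measurable_of_countable fun n => multinomialWeight u uK n j).comp hξ).aestronglyMeasurable 1
      (ae_of_all _ fun ω => by
        rw [Real.norm_of_nonneg (multinomialWeight_nonneg hu huK _ j)]
        exact multinomialWeight_le_one hu huK husum _ j)
  rw [← ENNReal.ofReal_toReal (measure_ne_top μ' _), hpmf, ← integral_mul_const,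
    ← ofReal_integral_eq_lintegral_ofReal hint
      (ae_of_all _ fun ω => multinomialWeight_nonneg hu huK _ j)]
  rfl

lemma integral_comp_eq_integral_of_hasSum
    (hξ : Measurable ξ) (hY : Measurable Y) (hu : ∀ ℓ, 0 ≤ u ℓ) (huK : 0 ≤ uK)
    (hlaw : ∀ j, μ' {ω' | Y ω' = j} = ∫⁻ ω, ENNReal.ofReal (multinomialWeight u uK (ξ ω) j) ∂μ)
    {F : (ι → ℕ) → ℝ} {G : ℕ → ℝ} (hF : ∀ j, 0 ≤ F j)
    (hFG : ∀ n, HasSum (fun j => F j * multinomialWeight u uK n j) (G n)) :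
    ∫ ω', F (Y ω') ∂μ' = ∫ ω, G (ξ ω) ∂μ := by
  have hterm_nonneg : ∀ n j, 0 ≤ F j * multinomialWeight u uK n j := fun n j =>
    mul_nonneg (hF j) (multinomialWeight_nonneg hu huK n j)
  have hG : ∀ n, 0 ≤ G n := fun n => (hFG n).nonneg (hterm_nonneg n)
  have hsum : ∀ n, ∑' j, ENNReal.ofReal (F j) * ENNReal.ofReal (multinomialWeight u uK n j) =
      ENNReal.ofReal (G n) := fun n => by
    simp_rw [← ENNReal.ofReal_mul (hF _)]
    rw [← ENNReal.ofReal_tsum_of_nonneg (hterm_nonneg n) (hFG n).summable, (hFG n).tsum_eq]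
  rw [integral_eq_lintegral_of_nonneg_ae (ae_of_all _ fun ω' => hF _)
      ((measurable_of_countable F).comp hY).aestronglyMeasurable,
    integral_eq_lintegral_of_nonneg_ae (ae_of_all _ fun ω => hG _)
      ((measurable_of_countable G).comp hξ).aestronglyMeasurable,
    lintegral_comp_eq_lintegral_tsum_of_measure_eq hξ hY
      (fun n j => ENNReal.ofReal (multinomialWeight u uK n j)) hlaw fun j => ENNReal.ofReal (F j)]
  simp_rw [hsum]

lemma integral_prod_descFactorial
    (hξ : Measurable ξ) (hY : Measurable Y) (hu : ∀ ℓ, 0 ≤ u ℓ) (huK : 0 ≤ uK)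
    (husum : ∑ ℓ, u ℓ + uK = 1)
    (hlaw : ∀ j, μ' {ω' | Y ω' = j} = ∫⁻ ω, ENNReal.ofReal (multinomialWeight u uK (ξ ω) j) ∂μ)
    (c : ι → ℕ) :
    ∫ ω', (∏ ℓ, ((Y ω' ℓ).descFactorial (c ℓ) : ℝ)) ∂μ' =
      (∫ ω, ((ξ ω).descFactorial (∑ ℓ, c ℓ) : ℝ) ∂μ) * ∏ ℓ, u ℓ ^ c ℓ := by
  rw [← integral_mul_const]
  exact integral_comp_eq_integral_of_hasSum hξ hY hu huK hlaw
    (fun j => prod_nonneg fun ℓ _ => Nat.cast_nonneg _)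
    (hasSum_prod_descFactorial_mul_multinomialWeight husum · c)

lemma integral_descFactorial_apply
    (hξ : Measurable ξ) (hY : Measurable Y) (hu : ∀ ℓ, 0 ≤ u ℓ) (huK : 0 ≤ uK)
    (husum : ∑ ℓ, u ℓ + uK = 1)
    (hlaw : ∀ j, μ' {ω' | Y ω' = j} = ∫⁻ ω, ENNReal.ofReal (multinomialWeight u uK (ξ ω) j) ∂μ)
    (ℓ : ι) (m : ℕ) :
    ∫ ω', ((Y ω' ℓ).descFactorial m : ℝ) ∂μ' = (∫ ω, ((ξ ω).descFactorial m : ℝ) ∂μ) * u ℓ ^ m := by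
  classical
  convert integral_prod_descFactorial hξ hY hu huK husum hlaw (Pi.single ℓ m) using 3
  · exact (prod_apply_pi_single (f := fun ℓ' k => ((Y _ ℓ').descFactorial k : ℝ))
      (by simp) ℓ m).symm
  · simp
  · exact (prod_apply_pi_single (f := fun ℓ' k => u ℓ' ^ k) (by simp) ℓ m).symm

lemma integral_apply_mul_apply
    (hξ : Measurable ξ) (hY : Measurable Y) (hu : ∀ ℓ, 0 ≤ u ℓ) (huK : 0 ≤ uK)
    (husum : ∑ ℓ, u ℓ + uK = 1)
    (hlaw : ∀ j, μ' {ω' | Y ω' = j} = ∫⁻ ω, ENNReal.ofReal (multinomialWeight u uK (ξ ω) j) ∂μ)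
    {ℓ₁ ℓ₂ : ι} (hne : ℓ₁ ≠ ℓ₂) :
    ∫ ω', (Y ω' ℓ₁ : ℝ) * (Y ω' ℓ₂ : ℝ) ∂μ' =
      (∫ ω, ((ξ ω).descFactorial 2 : ℝ) ∂μ) * (u ℓ₁ * u ℓ₂) := by
  classical
  convert integral_prod_descFactorial hξ hY hu huK husum hlaw
    (Pi.single ℓ₁ 1 + Pi.single ℓ₂ 1) using 3
  · rw [prod_apply_pi_single_add_pi_single (f := fun ℓ k => ((Y _ ℓ).descFactorial k : ℝ))
      (by simp) hne]
    simp
  · simp [sum_add_distrib]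
  · rw [prod_apply_pi_single_add_pi_single (f := fun ℓ k => u ℓ ^ k) (by simp) hne,
      pow_one, pow_one]

end mixture

theorem branching_offspring_marginal_moments_and_covariance_general
    {Ω : Type*} [MeasurableSpace Ω] (μ : Measure Ω) [IsProbabilityMeasure μ]
    {Ω' : Type*} [MeasurableSpace Ω'] (μ' : Measure Ω') [IsProbabilityMeasure μ']
    (ξ : Ω → ℕ) (hξ : Measurable ξ)
    (L : ℕ)
    (u : Fin L → ℝ) (uK : ℝ) (hu : ∀ ℓ, 0 ≤ u ℓ) (huK : 0 ≤ uK)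
    (husum : (∑ ℓ, u ℓ) + uK = 1)
    (Y : Ω' → Fin L → ℕ) (hY : Measurable Y)
    (hpmf : ∀ j : Fin L → ℕ, (μ' {ω' | Y ω' = j}).toReal =
      (∫ ω, ((ξ ω).descFactorial (∑ ℓ, j ℓ) : ℝ) * uK ^ (ξ ω - ∑ ℓ, j ℓ) ∂μ) *
        ∏ ℓ, u ℓ ^ j ℓ / ((j ℓ)! : ℝ)) :
    (∀ (ℓ : Fin L) (m : ℕ),
      ∫ ω', ((Y ω' ℓ).descFactorial m : ℝ) ∂μ' =
        (∫ ω, ((ξ ω).descFactorial m : ℝ) ∂μ) * u ℓ ^ m) ∧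
    (∀ ℓ₁ ℓ₂ : Fin L, ℓ₁ ≠ ℓ₂ →
      (∫ ω', (Y ω' ℓ₁ : ℝ) * (Y ω' ℓ₂ : ℝ) ∂μ') -
          (∫ ω', (Y ω' ℓ₁ : ℝ) ∂μ') * (∫ ω', (Y ω' ℓ₂ : ℝ) ∂μ') =
        ((∫ ω, ((ξ ω).descFactorial 2 : ℝ) ∂μ) - (∫ ω, (ξ ω : ℝ) ∂μ) ^ 2) *
          u ℓ₁ * u ℓ₂) := by
  have hlaw := fun j => measure_eq_lintegral_multinomialWeight hξ hu huK husum (hpmf j)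
  have hmean := fun ℓ => integral_descFactorial_apply hξ hY hu huK husum hlaw ℓ 1
  simp only [Nat.descFactorial_one, pow_one] at hmean
  refine ⟨integral_descFactorial_apply hξ hY hu huK husum hlaw, fun ℓ₁ ℓ₂ hne => ?_⟩
  rw [integral_apply_mul_apply hξ hY hu huK husum hlaw hne, hmean, hmean]
  ring

/-- Marginal descending factorial moments and covariances of a random vector `Y` with
probability mass function `p(j) = E((ξ)_{|j|}·u_K^{ξ-|j|})·∏_ℓ u_ℓ^{j_ℓ}/j_ℓ!`:
`E((Y_ℓ)_m) = E((ξ)_m)·u_ℓ^m` and, for `ℓ₁ ≠ ℓ₂`,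
`Cov(Y_{ℓ₁},Y_{ℓ₂}) = (E((ξ)_2) - (Eξ)²)·u_{ℓ₁}·u_{ℓ₂}`. -/
theorem branching_offspring_marginal_moments_and_covariance
    {Ω : Type*} [MeasurableSpace Ω] (μ : Measure Ω) [IsProbabilityMeasure μ]
    {Ω' : Type*} [MeasurableSpace Ω'] (μ' : Measure Ω') [IsProbabilityMeasure μ']
    (ξ : Ω → ℕ) (hξ : Measurable ξ)
    (hξ2 : Integrable (fun ω => ((ξ ω : ℝ)) ^ 2) μ)
    (L : ℕ) (hL : 1 ≤ L)
    (u : Fin L → ℝ) (uK : ℝ) (hu : ∀ ℓ, 0 ≤ u ℓ) (huK : 0 ≤ uK)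
    (husum : (∑ ℓ, u ℓ) + uK = 1)
    (Y : Ω' → Fin L → ℕ) (hY : Measurable Y)
    (hpmf : ∀ j : Fin L → ℕ, (μ' {ω' | Y ω' = j}).toReal =
      (∫ ω, ((ξ ω).descFactorial (∑ ℓ, j ℓ) : ℝ) * uK ^ (ξ ω - ∑ ℓ, j ℓ) ∂μ) *
        ∏ ℓ, u ℓ ^ j ℓ / ((j ℓ)! : ℝ)) :
    (∀ (ℓ : Fin L) (m : ℕ),
      ∫ ω', ((Y ω' ℓ).descFactorial m : ℝ) ∂μ' =
        (∫ ω, ((ξ ω).descFactorial m : ℝ) ∂μ) * u ℓ ^ m) ∧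
    (∀ ℓ₁ ℓ₂ : Fin L, ℓ₁ ≠ ℓ₂ →
      (∫ ω', (Y ω' ℓ₁ : ℝ) * (Y ω' ℓ₂ : ℝ) ∂μ') -
          (∫ ω', (Y ω' ℓ₁ : ℝ) ∂μ') * (∫ ω', (Y ω' ℓ₂ : ℝ) ∂μ') =
        ((∫ ω, ((ξ ω).descFactorial 2 : ℝ) ∂μ) - (∫ ω, (ξ ω : ℝ) ∂μ) ^ 2) *
          u ℓ₁ * u ℓ₂) :=
  branching_offspring_marginal_moments_and_covariance_general μ μ' ξ hξ L u uK hu huK husum Y hY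
    hpmf
end
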